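/- For any two positive integers n and m and any primitive Dirichlet character χ* modulo c*, one has ∑_{ℓd = n} χ*(d) · g(χ*, ℓc*, m) = τ(χ*) · conj(χ*)(m/n) · n if n divides m, and ∑_{ℓd = n} χ*(d) · g(χ*, ℓc*, m) = 0 otherwise; here the sum runs over all factorizations n = ℓd into positive integers. -/

import Mathlib

open scoped BigOperators

noncomputable def eC (x : ℝ) : ℂ := Complex.exp (2 * Real.pi * Complex.I * x)

/-- Gauss sum of the character modulo `c` induced by `χs` (defined modulo `cs`, with `cs ∣ c`). -/
noncomputable def gSum {cs : ℕ} (χs : DirichletCharacter ℂ cs) (c : ℕ) (m : ℤ) : ℂ :=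
  ∑ u ∈ (Finset.range c).filter fun u => Nat.Coprime u c,
    χs ((u : ℕ) : ZMod cs) * eC ((m : ℝ) * (u : ℝ) / (c : ℝ))

/-!
Every `v` coprime to `c*` factors uniquely as `v = d u` with `d = gcd(v, n)` and `u` coprime to
`(n / d) c*`, so the left-hand side is the single sum `∑_{v mod n c*} χ*(v) e(m v / (n c*))`.
Splitting `v = c* t + a` factors it as `∑_{t mod n} e(m t / n)`, which is `n` or `0` according as
`n ∣ m`, times `∑_{a mod c*} χ*(a) e(m a / (n c*))`. When `m = n k` the latter is
`g(χ*, c*, k) = conj χ*(k) τ(χ*)` by primitivity of `χ*`.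
-/

open Finset

lemma eC_add (x y : ℝ) : eC (x + y) = eC x * eC y := by
  simp only [eC, Complex.ofReal_add, mul_add, Complex.exp_add]

lemma eC_intCast_div (j : ℤ) (c : ℕ) [NeZero c] : eC (j / c) = ZMod.stdAddChar (j : ZMod c) := by
  rw [ZMod.stdAddChar_coe, eC]
  push_cast
  ring_nf

lemma Finset.sum_range_mul_eq_sum_sum {M : Type*} [AddCommMonoid M] (f : ℕ → M) (n c : ℕ) :
    ∑ v ∈ range (n * c), f v = ∑ t ∈ range n, ∑ a ∈ range c, f (c * t + a) := by
  induction n with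
  | zero => simp
  | succ n ih => rw [add_one_mul, sum_range_add, ih, sum_range_succ, mul_comm n c]

lemma ZMod.sum_range_natCast_eq_sum {M : Type*} [AddCommMonoid M] (c : ℕ) [NeZero c]
    (f : ZMod c → M) : ∑ u ∈ range c, f u = ∑ x : ZMod c, f x := by
  obtain ⟨k, rfl⟩ := Nat.exists_eq_succ_of_ne_zero (NeZero.ne c)
  rw [← Fin.sum_univ_eq_sum_range (fun u => f u)]
  exact sum_congr rfl fun x _ ↦ congrArg f (ZMod.natCast_zmod_val (n := k + 1) x)

lemma sum_range_eC_mul_div (m n : ℕ) [NeZero n] :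
    ∑ t ∈ range n, eC (m * t / n) = if n ∣ m then (n : ℂ) else 0 := by
  have h (t : ℕ) : eC (m * t / n) = ZMod.stdAddChar ((t : ZMod n) * (m : ZMod n)) := by
    simpa [mul_comm] using eC_intCast_div (m * t) n
  simp_rw [h, ZMod.sum_range_natCast_eq_sum n fun x ↦ ZMod.stdAddChar (x * (m : ZMod n)),
    AddChar.sum_mulShift _ (ZMod.isPrimitive_stdAddChar n), ZMod.natCast_eq_zero_iff, ZMod.card,
    Nat.cast_ite, Nat.cast_zero]

lemma Nat.gcd_mul_eq_left_of_coprime_div {d n u : ℕ} (hd : d ∣ n) (hu : u.Coprime (n / d)) :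
    (d * u).gcd n = d := by
  conv_lhs => rw [← Nat.mul_div_cancel' hd]
  rw [Nat.gcd_mul_left, hu.gcd_eq_one, mul_one]

lemma Nat.sum_divisors_sum_coprime_mul {M : Type*} [AddCommMonoid M] (n c : ℕ) (f : ℕ → M) :
    ∑ d ∈ n.divisors with d.Coprime c,
        ∑ u ∈ range (n / d * c) with u.Coprime (n / d * c), f (d * u) =
      ∑ v ∈ range (n * c) with v.Coprime c, f v := by
  rw [sum_sigma']
  refine sum_nbij' (fun x ↦ x.1 * x.2) (fun v ↦ ⟨v.gcd n, v / v.gcd n⟩) ?_ ?_ ?_ ?_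
    fun _ _ ↦ rfl
  · rintro ⟨d, u⟩ hx
    simp only [mem_sigma, mem_filter, Nat.mem_divisors, mem_range] at hx ⊢
    obtain ⟨⟨⟨hdn, hn⟩, hdc⟩, hu, huc⟩ := hx
    refine ⟨?_, hdc.mul_left (huc.coprime_dvd_right (dvd_mul_left c _))⟩
    calc d * u < d * (n / d * c) :=
          Nat.mul_lt_mul_of_pos_left hu (Nat.pos_of_dvd_of_pos hdn (Nat.pos_of_ne_zero hn))
      _ = n * c := by rw [← mul_assoc, Nat.mul_div_cancel' hdn]
  · intro v hv
    simp only [mem_sigma, mem_filter, Nat.mem_divisors, mem_range] at hv ⊢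
    obtain ⟨hv, hvc⟩ := hv
    have hn : n ≠ 0 := by rintro rfl; simp at hv
    have hg : v.gcd n ∣ n := Nat.gcd_dvd_right v n
    have hg0 : 0 < v.gcd n := Nat.gcd_pos_of_pos_right v (Nat.pos_of_ne_zero hn)
    refine ⟨⟨⟨hg, hn⟩, hvc.coprime_dvd_left (Nat.gcd_dvd_left v n)⟩, ?_, ?_⟩
    · rwa [Nat.div_lt_iff_lt_mul hg0, mul_right_comm, Nat.div_mul_cancel hg]
    · exact (Nat.coprime_div_gcd_div_gcd hg0).mul_right
        (hvc.coprime_dvd_left (Nat.div_dvd_of_dvd (Nat.gcd_dvd_left v n)))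
  · rintro ⟨d, u⟩ hx
    simp only [mem_sigma, mem_filter, Nat.mem_divisors, mem_range] at hx
    obtain ⟨⟨⟨hdn, hn⟩, -⟩, -, huc⟩ := hx
    rw [Nat.gcd_mul_eq_left_of_coprime_div hdn (huc.coprime_dvd_right (dvd_mul_right _ _)),
      Nat.mul_div_cancel_left u (Nat.pos_of_dvd_of_pos hdn (Nat.pos_of_ne_zero hn))]
  · intro v _
    exact Nat.mul_div_cancel' (Nat.gcd_dvd_left v n)

namespace DirichletCharacter

variable {N : ℕ} (χ : DirichletCharacter ℂ N)

lemma natCast_eq_zero_of_not_coprime {u : ℕ} (h : ¬ u.Coprime N) : χ u = 0 :=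
  χ.map_nonunit <| by rwa [ZMod.isUnit_iff_coprime]

lemma sum_filter_coprime_mul (s : Finset ℕ) (f : ℕ → ℂ) :
    ∑ u ∈ s with u.Coprime N, χ u * f u = ∑ u ∈ s, χ u * f u :=
  sum_filter_of_ne fun _ _ hu ↦ by_contra fun h ↦
    hu (by rw [χ.natCast_eq_zero_of_not_coprime h, zero_mul])

lemma gSum_eq_gaussSum [NeZero N] (k : ℤ) :
    gSum χ N k = gaussSum χ (ZMod.stdAddChar.mulShift (k : ZMod N)) := by
  rw [gSum, χ.sum_filter_coprime_mul, gaussSum,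
    ← ZMod.sum_range_natCast_eq_sum N fun x ↦ χ x * ZMod.stdAddChar.mulShift (k : ZMod N) x]
  refine sum_congr rfl fun u _ ↦ ?_
  rw [AddChar.mulShift_apply, ← Int.cast_natCast u, ← Int.cast_mul, ← eC_intCast_div]
  push_cast
  rfl

lemma sum_divisors_mul_gSum (n : ℕ) (m : ℤ) :
    ∑ d ∈ n.divisors, χ d * gSum χ (n / d * N) m =
      ∑ v ∈ range (n * N), χ v * eC (m * v / (n * N)) := by
  calc ∑ d ∈ n.divisors, χ d * gSum χ (n / d * N) m
      = ∑ d ∈ n.divisors with d.Coprime N,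
          ∑ u ∈ range (n / d * N) with u.Coprime (n / d * N),
            χ ↑(d * u) * eC (m * ↑(d * u) / (n * N)) := by
        rw [← χ.sum_filter_coprime_mul]
        refine sum_congr rfl fun d hd ↦ ?_
        have hdn : d ∣ n := Nat.dvd_of_mem_divisors (mem_filter.1 hd).1
        have hd0 : (d : ℝ) ≠ 0 :=
          Nat.cast_ne_zero.2 (Nat.pos_of_mem_divisors (mem_filter.1 hd).1).ne'
        rw [gSum, mul_sum]
        refine sum_congr rfl fun u _ ↦ ?_
        rw [← mul_assoc, ← map_mul, ← Nat.cast_mul]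
        congr 2
        push_cast [Nat.cast_div_charZero hdn]
        field_simp
    _ = ∑ v ∈ range (n * N) with v.Coprime N, χ v * eC (m * v / (n * N)) :=
        Nat.sum_divisors_sum_coprime_mul n N fun v ↦ χ v * eC (m * v / (n * N))
    _ = _ := χ.sum_filter_coprime_mul _ _

lemma sum_range_mul_eC_eq_mul (n : ℕ) (m : ℤ) :
    ∑ v ∈ range (n * N), χ v * eC (m * v / (n * N)) =
      (∑ t ∈ range n, eC (m * t / n)) * ∑ a ∈ range N, χ a * eC (m * a / (n * N)) := by
  rw [sum_range_mul_eq_sum_sum, sum_mul_sum]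
  refine sum_congr rfl fun t ht ↦ sum_congr rfl fun a ha ↦ ?_
  have hn : (n : ℝ) ≠ 0 := Nat.cast_ne_zero.2 (ne_zero_of_lt (mem_range.1 ht))
  have hN : (N : ℝ) ≠ 0 := Nat.cast_ne_zero.2 (ne_zero_of_lt (mem_range.1 ha))
  have hχ : χ ↑(N * t + a) = χ a := by simp
  have harg : m * ((N * t + a : ℕ) : ℝ) / (n * N) = m * t / n + m * a / (n * N) := by
    push_cast
    field_simp
  rw [hχ, harg, eC_add]
  ring

lemma sum_range_mul_eC_eq_gSum {n : ℕ} (hn : n ≠ 0) (k : ℕ) :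
    ∑ a ∈ range N, χ a * eC ((n * k : ℕ) * a / (n * N)) = gSum χ N k := by
  rw [gSum, χ.sum_filter_coprime_mul]
  refine sum_congr rfl fun a _ ↦ ?_
  have hn : (n : ℝ) ≠ 0 := Nat.cast_ne_zero.2 hn
  push_cast
  field_simp

end DirichletCharacter

theorem gauss_sum_collapse_general {cs : ℕ} (hcs : 0 < cs)
    (χs : DirichletCharacter ℂ cs) (hprim : χs.IsPrimitive)
    (n m : ℕ) (hn : 0 < n) :
    (n ∣ m →
      ∑ d ∈ n.divisors, χs ((d : ℕ) : ZMod cs) * gSum χs (n / d * cs) (m : ℤ) =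
        gSum χs cs 1 * (starRingEnd ℂ) (χs ((m / n : ℕ) : ZMod cs)) * (n : ℂ)) ∧
    (¬ n ∣ m →
      ∑ d ∈ n.divisors, χs ((d : ℕ) : ZMod cs) * gSum χs (n / d * cs) (m : ℤ) = 0) := by
  have : NeZero cs := ⟨hcs.ne'⟩
  have : NeZero n := ⟨hn.ne'⟩
  rw [χs.sum_divisors_mul_gSum, χs.sum_range_mul_eC_eq_mul, Int.cast_natCast,
    sum_range_eC_mul_div]
  refine ⟨?_, fun h ↦ by rw [if_neg h, zero_mul]⟩
  rintro ⟨k, rfl⟩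
  rw [if_pos (dvd_mul_right n k), Nat.mul_div_cancel_left k hn,
    χs.sum_range_mul_eC_eq_gSum hn.ne', χs.gSum_eq_gaussSum, χs.gSum_eq_gaussSum,
    gaussSum_mulShift_of_isPrimitive _ hprim, Int.cast_natCast, Int.cast_one,
    AddChar.mulShift_one, ← MulChar.star_apply', starRingEnd_apply]
  ring

/-- For positive integers `n`, `m` and a primitive character `χ*` mod `c*`:
`∑_{ℓd = n} χ*(d) g(χ*, ℓc*, m)` equals `τ(χ*) conj(χ*)(m/n) n` if `n ∣ m`, and `0` otherwise. -/
theorem gauss_sum_collapse {cs : ℕ} (hcs : 0 < cs)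
    (χs : DirichletCharacter ℂ cs) (hprim : χs.IsPrimitive)
    (n m : ℕ) (hn : 0 < n) (hm : 0 < m) :
    (n ∣ m →
      ∑ d ∈ n.divisors, χs ((d : ℕ) : ZMod cs) * gSum χs (n / d * cs) (m : ℤ) =
        gSum χs cs 1 * (starRingEnd ℂ) (χs ((m / n : ℕ) : ZMod cs)) * (n : ℂ)) ∧
    (¬ n ∣ m →
      ∑ d ∈ n.divisors, χs ((d : ℕ) : ZMod cs) * gSum χs (n / d * cs) (m : ℤ) = 0) :=
  gauss_sum_collapse_general hcs χs hprim n m hn
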